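/- Setup: fix finite sets B₁, C, H; for each b ∈ B₁ ∪ {∞} a nonempty finite set A_b with positive integers m_{b,a}; for each c ∈ C a finite (possibly empty) set A'_c with positive integers m'_{c,a'} and a nonempty finite set A''_c with positive integers m''_{c,a''}. Let L, L', j, f_*, f'_* be as follows: L is the free ℤ-module on I = (⊔_{b∈B₁∪{∞}} A_b) ⊔ (⊔_{c∈C} A'_c) ⊔ H, L' the free ℤ-module on I ⊔ (⊔_{c∈C} A''_c), j : L' → L the projection forgetting the A''-coordinates, (f_*α)_b = ∑_{a∈A_b} m_{b,a}α_{b,a} − ∑_{a∈A_∞} m_{∞,a}α_{∞,a} for b ∈ B₁, and f'_* : L' → ℤ^{B₁} ⊕ ℤ^{C} given by the same B₁-formula together with c-components ∑_{a'} m'_{c,a'}β_{c,a'} + ∑_{a''} m''_{c,a''}β_{c,a''} − ∑_{a∈A_∞} m_{∞,a}β_{∞,a}. Set m''(c) = gcd_{a''∈A''_c} m''_{c,a''} and m'(c) = gcd_{a'∈A'_c} m'_{c,a'} (with m'(c) = 0 if A'_c is empty). If gcd(m'(c), m''(c)) = 1 for every c ∈ C, then the quotient group T = (ker f_*)/j(ker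 f'_*) is isomorphic to G = ⊕_{c∈C} ℤ/m''(c)ℤ. In particular, if m'_{c,a'} = 1 and m''_{c,a''} = 1 for all c, a', a'', then T is the trivial group. -/

import Mathlib

/-!
Reading the `c`-component of `f'_* β = 0` modulo `m''(c)` shows that the integer
`∑_{a ∈ A_∞} m_{∞,a} α_{∞,a} − ∑_{a' ∈ A'_c} m'_{c,a'} α_{c,a'}` is a multiple of `m''(c)`
whenever `α = j β`; conversely, by Bézout, every multiple of `m''(c)` is of the form
`∑ m''_{c,a''} β_{c,a''}`, so these congruences cut out exactly `j(ker f'_*)` inside `ker f_*`.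
Hence `ker θ = j(ker f'_*)`, and `θ` is onto because `m'(c)` is invertible modulo `m''(c)`.
-/

open Finset

section PencilModel

variable (B₁ C H : Type) [Fintype B₁] [Fintype C] [Fintype H]
  (A : Option B₁ → Type) [∀ b, Fintype (A b)]
  (A' : C → Type) [∀ c, Fintype (A' c)]
  (A'' : C → Type) [∀ c, Fintype (A'' c)]
  (m : ∀ b, A b → ℕ) (m' : ∀ c, A' c → ℕ) (m'' : ∀ c, A'' c → ℕ)

/-- The index set of the basis of elementary loops of `L = H₁(M)`: loops around the
curves `C_{b,a}` (`b ∈ B₁ ∪ {∞}`, `a ∈ A_b`), the curves `C'_{c,a'}` (`c ∈ C`,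
`a' ∈ A'_c`) and the horizontal components (indexed by `H`). -/
abbrev Idx := (Σ b : Option B₁, A b) ⊕ ((Σ c : C, A' c) ⊕ H)

/-- The index set of the basis of elementary loops of `L' = H₁(M')`: that of `L`
together with loops around the extra deleted curves `C''_{c,a''}`. -/
abbrev Idx' := (Idx B₁ C H A A') ⊕ (Σ c : C, A'' c)

/-- The projection `j : L' → L` forgetting the `A''`-coordinates. -/
def jmap : ((Idx' B₁ C H A A' A'') → ℤ) →+ ((Idx B₁ C H A A') → ℤ) :=
  AddMonoidHom.mk' (fun β i => β (Sum.inl i)) (fun _ _ => rfl)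

/-- The map `f_* : L → ℤ^{B₁}`,
`(f_* α)_b = ∑_{a ∈ A_b} m_{b,a} α_{b,a} − ∑_{a ∈ A_∞} m_{∞,a} α_{∞,a}`. -/
def fstar : ((Idx B₁ C H A A') → ℤ) →+ (B₁ → ℤ) :=
  AddMonoidHom.mk'
    (fun α b =>
      (∑ a : A (some b), (m (some b) a : ℤ) * α (Sum.inl ⟨some b, a⟩)) -
      (∑ a : A none, (m none a : ℤ) * α (Sum.inl ⟨none, a⟩)))
    (by
      intro x y
      funext b
      simp only [Pi.add_apply, mul_add, Finset.sum_add_distrib]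
      ring)

/-- The map `f'_* : L' → ℤ^{B₁} ⊕ ℤ^{C}`, with the same `B₁`-components as `f_*` and with
`c`-component `∑_{a'} m'_{c,a'} β_{c,a'} + ∑_{a''} m''_{c,a''} β_{c,a''}
− ∑_{a ∈ A_∞} m_{∞,a} β_{∞,a}`. -/
def fstar' : ((Idx' B₁ C H A A' A'') → ℤ) →+ ((B₁ → ℤ) × (C → ℤ)) :=
  AddMonoidHom.mk'
    (fun β =>
      (fun b =>
        (∑ a : A (some b), (m (some b) a : ℤ) * β (Sum.inl (Sum.inl ⟨some b, a⟩))) -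
        (∑ a : A none, (m none a : ℤ) * β (Sum.inl (Sum.inl ⟨none, a⟩))),
       fun c =>
        (∑ a' : A' c, (m' c a' : ℤ) * β (Sum.inl (Sum.inr (Sum.inl ⟨c, a'⟩)))) +
        (∑ a'' : A'' c, (m'' c a'' : ℤ) * β (Sum.inr ⟨c, a''⟩)) -
        (∑ a : A none, (m none a : ℤ) * β (Sum.inl (Sum.inl ⟨none, a⟩)))))
    (by
      intro x y
      refine Prod.ext (funext fun b => ?_) (funext fun c => ?_) <;>
      · simp only [Prod.fst_add, Prod.snd_add, Pi.add_apply, mul_add, Finset.sum_add_distrib]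
        ring)

/-- `m''(c)`, the gcd of the multiplicities `m''_{c,a''}` over `a'' ∈ A''_c`. -/
def gcd2 (c : C) : ℕ := Finset.univ.gcd (m'' c)

/-- The map `θ : ker f_* → G = ⊕_{c ∈ C} ℤ/m''(c)ℤ` sending `α` to the element whose
`c`-coordinate is the class of
`∑_{a ∈ A_∞} m_{∞,a} α_{∞,a} − ∑_{a' ∈ A'_c} m'_{c,a'} α_{c,a'}` modulo `m''(c)`. -/
def theta : (fstar B₁ C H A A' m).ker →+ (∀ c : C, ZMod (gcd2 C A'' m'' c)) :=
  AddMonoidHom.mk'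
    (fun α c =>
      ((((∑ a : A none, (m none a : ℤ) * (α : (Idx B₁ C H A A') → ℤ) (Sum.inl ⟨none, a⟩)) -
         (∑ a' : A' c, (m' c a' : ℤ) * (α : (Idx B₁ C H A A') → ℤ) (Sum.inr (Sum.inl ⟨c, a'⟩)))) : ℤ) :
        ZMod (gcd2 C A'' m'' c)))
    (by
      intro x y
      funext c
      simp only [AddSubgroup.coe_add, Pi.add_apply, mul_add, Finset.sum_add_distrib]
      push_cast
      ring)

end PencilModel

theorem Finset.natCast_gcd {ι : Type*} (s : Finset ι) (n : ι → ℕ) :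
    ((s.gcd n : ℕ) : ℤ) = s.gcd (fun i => (n i : ℤ)) := by
  classical
  induction s using Finset.induction with
  | empty => simp
  | insert i s hi ih =>
    rw [gcd_insert, gcd_insert, ← ih, ← Int.coe_gcd, Int.gcd_natCast_natCast]
    rfl

section Bezout

variable {ι : Type*} [Fintype ι]

theorem exists_sum_mul_eq_iff_gcd_dvd (n : ι → ℕ) (z : ℤ) :
    (∃ y : ι → ℤ, ∑ i, (n i : ℤ) * y i = z) ↔ ((univ.gcd n : ℕ) : ℤ) ∣ z := by
  constructor
  · rintro ⟨y, rfl⟩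
    exact dvd_sum fun i _ =>
      (Int.natCast_dvd_natCast.mpr (gcd_dvd (mem_univ i))).mul_right _
  · rintro ⟨k, rfl⟩
    obtain ⟨g, hg⟩ := univ.gcd_eq_sum_mul fun i => (n i : ℤ)
    refine ⟨fun i => g i * k, ?_⟩
    simp only [natCast_gcd, hg, sum_mul, mul_assoc]

theorem exists_intCast_sum_mul_eq_of_coprime (n : ι → ℕ) {N : ℕ}
    (hcop : Nat.Coprime (univ.gcd n) N) (g : ZMod N) :
    ∃ x : ι → ℤ, ((∑ i, (n i : ℤ) * x i : ℤ) : ZMod N) = g := by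
  set u := ZMod.unitOfCoprime _ hcop
  obtain ⟨s, hs⟩ := ZMod.intCast_surjective (((u⁻¹ : (ZMod N)ˣ) : ZMod N) * g)
  obtain ⟨x, hx⟩ := (exists_sum_mul_eq_iff_gcd_dvd n (univ.gcd n * s)).mpr (dvd_mul_right _ _)
  refine ⟨x, ?_⟩
  rw [hx, Int.cast_mul, hs, Int.cast_natCast, ← ZMod.coe_unitOfCoprime _ hcop]
  exact u.mul_inv_cancel_left g

end Bezout

theorem gcd2_eq_one {C : Type} {A'' : C → Type} [∀ c, Fintype (A'' c)] [∀ c, Nonempty (A'' c)]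
    {m'' : ∀ c, A'' c → ℕ} (h : ∀ c a'', m'' c a'' = 1) (c : C) :
    gcd2 C A'' m'' c = 1 :=
  Nat.dvd_one.mp (h c (Classical.arbitrary _) ▸ gcd_dvd (mem_univ _))

section PencilModel

variable {B₁ C H : Type}
  {A : Option B₁ → Type} [∀ b, Fintype (A b)]
  {A' : C → Type} [∀ c, Fintype (A' c)]
  {A'' : C → Type} [∀ c, Fintype (A'' c)]
  {m : ∀ b, A b → ℕ} {m' : ∀ c, A' c → ℕ} {m'' : ∀ c, A'' c → ℕ}

def thetaLift (m : ∀ b, A b → ℕ) (m' : ∀ c, A' c → ℕ) (α : Idx B₁ C H A A' → ℤ) (c : C) : ℤ :=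
  (∑ a : A none, (m none a : ℤ) * α (Sum.inl ⟨none, a⟩)) -
    ∑ a' : A' c, (m' c a' : ℤ) * α (Sum.inr (Sum.inl ⟨c, a'⟩))

theorem theta_apply (α : (fstar B₁ C H A A' m).ker) (c : C) :
    theta B₁ C H A A' A'' m m' m'' α c =
      (thetaLift m m' (α : Idx B₁ C H A A' → ℤ) c : ZMod (gcd2 C A'' m'' c)) :=
  rfl

theorem mem_map_jmap_ker_fstar'_iff {α : Idx B₁ C H A A' → ℤ}
    (hα : α ∈ (fstar B₁ C H A A' m).ker) :
    α ∈ (fstar' B₁ C H A A' A'' m m' m'').ker.map (jmap B₁ C H A A' A'') ↔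
      ∀ c, ∃ y : A'' c → ℤ, ∑ a'', (m'' c a'' : ℤ) * y a'' = thetaLift m m' α c := by
  constructor
  · rintro ⟨β, hβ, rfl⟩ c
    refine ⟨fun a'' => β (Sum.inr ⟨c, a''⟩), ?_⟩
    have hβc := congrFun (congrArg Prod.snd (AddMonoidHom.mem_ker.mp hβ)) c
    simp only [fstar', AddMonoidHom.mk'_apply, Prod.snd_zero, Pi.zero_apply] at hβc
    simp only [thetaLift, jmap, AddMonoidHom.mk'_apply]
    linarith
  · intro hy
    choose y hy using hy
    refine ⟨Sum.elim α fun p => y p.1 p.2, AddMonoidHom.mem_ker.mpr ?_, rfl⟩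
    refine Prod.ext (AddMonoidHom.mem_ker.mp hα) (funext fun c => ?_)
    simp only [fstar', AddMonoidHom.mk'_apply, Sum.elim_inl, Sum.elim_inr, hy c, thetaLift,
      Prod.snd_zero, Pi.zero_apply]
    ring

theorem ker_theta :
    (theta B₁ C H A A' A'' m m' m'').ker =
      ((fstar' B₁ C H A A' A'' m m' m'').ker.map (jmap B₁ C H A A' A'')).addSubgroupOf
        (fstar B₁ C H A A' m).ker := by
  ext ⟨α, hα⟩
  rw [AddMonoidHom.mem_ker, AddSubgroup.mem_addSubgroupOf, mem_map_jmap_ker_fstar'_iff hα,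
    funext_iff]
  refine forall_congr' fun c => ?_
  rw [theta_apply, Pi.zero_apply, ZMod.intCast_zmod_eq_zero_iff_dvd, gcd2,
    exists_sum_mul_eq_iff_gcd_dvd]

theorem theta_surjective
    (hcop : ∀ c : C, Nat.Coprime (univ.gcd (m' c)) (gcd2 C A'' m'' c)) :
    Function.Surjective (theta B₁ C H A A' A'' m m' m'') := by
  intro g
  choose x hx using fun c => exists_intCast_sum_mul_eq_of_coprime (m' c) (hcop c) (-g c)
  let α : Idx B₁ C H A A' → ℤ := Sum.elim 0 (Sum.elim (fun p => x p.1 p.2) 0)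
  have hα : α ∈ (fstar B₁ C H A A' m).ker := by
    ext b
    simp [α, fstar]
  refine ⟨⟨α, hα⟩, funext fun c => ?_⟩
  simp [theta_apply, thetaLift, α, hx]

noncomputable def kerFstarQuotientEquiv
    (hcop : ∀ c : C, Nat.Coprime (univ.gcd (m' c)) (gcd2 C A'' m'' c)) :
    ((fstar B₁ C H A A' m).ker ⧸
        ((fstar' B₁ C H A A' A'' m m' m'').ker.map
          (jmap B₁ C H A A' A'')).addSubgroupOf (fstar B₁ C H A A' m).ker) ≃+
      (∀ c : C, ZMod (gcd2 C A'' m'' c)) :=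
  (QuotientAddGroup.quotientAddEquivOfEq ker_theta.symm).trans
    (QuotientAddGroup.quotientKerEquivOfSurjective _ (theta_surjective hcop))

end PencilModel

theorem stmt_13_general (B₁ C H : Type)
    (A : Option B₁ → Type) [∀ b, Fintype (A b)]
    (A' : C → Type) [∀ c, Fintype (A' c)]
    (A'' : C → Type) [∀ c, Fintype (A'' c)] [∀ c, Nonempty (A'' c)]
    (m : ∀ b, A b → ℕ)
    (m' : ∀ c, A' c → ℕ)
    (m'' : ∀ c, A'' c → ℕ)
    (hcop : ∀ c : C, Nat.gcd (Finset.univ.gcd (m' c)) (gcd2 C A'' m'' c) = 1) :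
    Nonempty
      (((fstar B₁ C H A A' m).ker ⧸
          ((fstar' B₁ C H A A' A'' m m' m'').ker.map
            (jmap B₁ C H A A' A'')).addSubgroupOf (fstar B₁ C H A A' m).ker) ≃+
        (∀ c : C, ZMod (gcd2 C A'' m'' c))) ∧
    ((∀ c a', m' c a' = 1) → (∀ c a'', m'' c a'' = 1) →
      Subsingleton
        ((fstar B₁ C H A A' m).ker ⧸
          ((fstar' B₁ C H A A' A'' m m' m'').ker.map
            (jmap B₁ C H A A' A'')).addSubgroupOf (fstar B₁ C H A A' m).ker)) := by
  refine ⟨⟨kerFstarQuotientEquiv hcop⟩, fun _ h'' => ?_⟩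
  have : ∀ c, Subsingleton (ZMod (gcd2 C A'' m'' c)) := fun c => by
    rw [gcd2_eq_one h'' c]
    infer_instance
  exact (kerFstarQuotientEquiv hcop).toEquiv.subsingleton

/-- if `gcd(m'(c), m''(c)) = 1` for all `c ∈ C` (none of the bifurcation
fibers is multiple), then `T = (ker f_*)/j(ker f'_*)` is isomorphic to
`G = ⊕_{c ∈ C} ℤ/m''(c)ℤ`; in particular if all the multiplicities `m'_{c,a'}` and
`m''_{c,a''}` are `1` (all fibers reduced), then `T` is trivial. -/
theorem stmt_13 (B₁ C H : Type) [Fintype B₁] [Fintype C] [Fintype H]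
    (A : Option B₁ → Type) [∀ b, Fintype (A b)] [∀ b, Nonempty (A b)]
    (A' : C → Type) [∀ c, Fintype (A' c)]
    (A'' : C → Type) [∀ c, Fintype (A'' c)] [∀ c, Nonempty (A'' c)]
    (m : ∀ b, A b → ℕ) (hm : ∀ b a, 0 < m b a)
    (m' : ∀ c, A' c → ℕ) (hm' : ∀ c a', 0 < m' c a')
    (m'' : ∀ c, A'' c → ℕ) (hm'' : ∀ c a'', 0 < m'' c a'')
    (hcop : ∀ c : C, Nat.gcd (Finset.univ.gcd (m' c)) (gcd2 C A'' m'' c) = 1) :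
    Nonempty
      (((fstar B₁ C H A A' m).ker ⧸
          ((fstar' B₁ C H A A' A'' m m' m'').ker.map
            (jmap B₁ C H A A' A'')).addSubgroupOf (fstar B₁ C H A A' m).ker) ≃+
        (∀ c : C, ZMod (gcd2 C A'' m'' c))) ∧
    ((∀ c a', m' c a' = 1) → (∀ c a'', m'' c a'' = 1) →
      Subsingleton
        ((fstar B₁ C H A A' m).ker ⧸
          ((fstar' B₁ C H A A' A'' m m' m'').ker.map
            (jmap B₁ C H A A' A'')).addSubgroupOf (fstar B₁ C H A A' m).ker)) :=
  stmt_13_general B₁ C H A A' A'' m m' m'' hcop
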